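/- arXiv:2212.00797 — 11 statements merged into one kernel-verified Lean document; each statement's English description precedes it below -/
import Mathlib

section
/- Let Θ ⊆ ℝ be an interval, let g : Θ → ℝ satisfy the sign condition with unique root θ* ∈ Θ, let θt ∈ Θ with θt < θ*, and let U(·|θt) : Θ → ℝ be a U-function for g at θt. If θnew ∈ Θ satisfies U(θnew|θt) = 0, then θt < θnew ≤ θ*. -/
/-- If `U(·|θt)` is a U-function for `g` at `θt ∈ Θ` with `θt < θ*`,
where `g` satisfies the sign condition with unique root `θ* ∈ Θ`, and `θnew ∈ Θ`
solves `U(θnew|θt) = 0`, then `θt < θnew ≤ θ*`. -/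
theorem stmt_0 (Θ : Set ℝ) (hΘ : Θ.OrdConnected) (g U : ℝ → ℝ)
    (θstar θt θnew : ℝ)
    (hθstar : θstar ∈ Θ) (hroot : g θstar = 0)
    (hpos : ∀ θ ∈ Θ, θ < θstar → 0 < g θ)
    (hneg : ∀ θ ∈ Θ, θstar < θ → g θ < 0)
    (hθt : θt ∈ Θ) (hlt : θt < θstar)
    (hU1 : ∀ θ ∈ Θ, θ < θt → g θ ≤ U θ)
    (hU2 : g θt = U θt)
    (hU3 : ∀ θ ∈ Θ, θt < θ → U θ ≤ g θ)
    (hθnew : θnew ∈ Θ) (hzero : U θnew = 0) :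
    θt < θnew ∧ θnew ≤ θstar := by
  constructor
  · by_contra h
    push_neg at h
    rcases eq_or_lt_of_le h with heq | hlt'
    · have := hpos θt hθt hlt
      have hz : U θt = 0 := heq ▸ hzero
      linarith [hU2]
    · have h1 := hU1 θnew hθnew hlt'
      have h2 := hpos θnew hθnew (hlt'.trans hlt)
      rw [hzero] at h1
      linarith
  · by_contra h
    push_neg at h
    have h1 := hU3 θnew hθnew (hlt.trans h)
    have h2 := hneg θnew hθnew h
    rw [hzero] at h1
    linarith
end

section
/- Let Θ ⊆ ℝ be an interval, let g : Θ → ℝ satisfy the sign condition with unique root θ* ∈ Θ, let θt ∈ Θ with θt > θ*, and let U(·|θt) : Θ → ℝ be a U-function for g at θt. If θnew ∈ Θ satisfies U(θnew|θt) = 0, then θ* ≤ θnew < θt. -/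
/-- If `U(·|θt)` is a U-function for `g` at `θt ∈ Θ` with `θt > θ*`,
where `g` satisfies the sign condition with unique root `θ* ∈ Θ`, and `θnew ∈ Θ`
solves `U(θnew|θt) = 0`, then `θ* ≤ θnew < θt`. -/
theorem stmt_1 (Θ : Set ℝ) (hΘ : Θ.OrdConnected) (g U : ℝ → ℝ)
    (θstar θt θnew : ℝ)
    (hθstar : θstar ∈ Θ) (hroot : g θstar = 0)
    (hpos : ∀ θ ∈ Θ, θ < θstar → 0 < g θ)
    (hneg : ∀ θ ∈ Θ, θstar < θ → g θ < 0)
    (hθt : θt ∈ Θ) (hgt : θstar < θt)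
    (hU1 : ∀ θ ∈ Θ, θ < θt → g θ ≤ U θ)
    (hU2 : g θt = U θt)
    (hU3 : ∀ θ ∈ Θ, θt < θ → U θ ≤ g θ)
    (hθnew : θnew ∈ Θ) (hzero : U θnew = 0) :
    θstar ≤ θnew ∧ θnew < θt := by
  have hgt0 : g θt < 0 := hneg θt hθt hgt
  have hlt : θnew < θt := by
    rcases lt_trichotomy θnew θt with h | h | h
    · exact h
    · exfalso; rw [h] at hzero; rw [hzero] at hU2; linarith
    · exfalso
      have := hU3 θnew hθnew h
      have := hneg θnew hθnew (lt_trans hgt h)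
      linarith
  refine ⟨?_, hlt⟩
  by_contra h
  push_neg at h
  have := hU1 θnew hθnew hlt
  have := hpos θnew hθnew h
  linarith
end

section
/- (Theorem 1, strongly stable convergence.) Let Θ ⊆ ℝ be an interval, let g : Θ → ℝ satisfy the sign condition with unique root θ* ∈ Θ, and let U : Θ × Θ → ℝ, written U(θ|φ), be jointly continuous and such that for every φ ∈ Θ the function U(·|φ) is a U-function for g at φ. Suppose a sequence (θ^(t))_{t≥0} in Θ satisfies U(θ^(t+1)|θ^(t)) = 0 for every t ≥ 0 and θ^(0) < θ*. Then the sequence is nondecreasing, satisfies θ^(t) ≤ θ* for all t ≥ 1, is strictly increasing at every index t with θ^(t) < θ*, and converges to θ*. -/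
/-- Theorem 1, strongly stable convergence: with a jointly continuous
family `U(θ|φ)` of U-functions for `g` (each `U(·|φ)` a U-function at `φ`), any
US sequence `θ^(t+1) = sol{U(θ|θ^(t)) = 0}` started at `θ^(0) < θ*` is nondecreasing,
stays `≤ θ*` for `t ≥ 1`, is strictly increasing while below `θ*`, and converges to `θ*`. -/
theorem stmt_2 (Θ : Set ℝ) (hΘ : Θ.OrdConnected) (g : ℝ → ℝ) (U : ℝ → ℝ → ℝ)
    (θstar : ℝ)
    (hθstar : θstar ∈ Θ) (hroot : g θstar = 0)
    (hpos : ∀ θ ∈ Θ, θ < θstar → 0 < g θ)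
    (hneg : ∀ θ ∈ Θ, θstar < θ → g θ < 0)
    (hUcont : ContinuousOn (fun p : ℝ × ℝ => U p.1 p.2) (Θ ×ˢ Θ))
    (hU1 : ∀ φ ∈ Θ, ∀ θ ∈ Θ, θ < φ → g θ ≤ U θ φ)
    (hU2 : ∀ φ ∈ Θ, g φ = U φ φ)
    (hU3 : ∀ φ ∈ Θ, ∀ θ ∈ Θ, φ < θ → U θ φ ≤ g θ)
    (θseq : ℕ → ℝ) (hmem : ∀ t, θseq t ∈ Θ)
    (hiter : ∀ t, U (θseq (t + 1)) (θseq t) = 0)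
    (hinit : θseq 0 < θstar) :
    Monotone θseq ∧ (∀ t, 1 ≤ t → θseq t ≤ θstar) ∧
      (∀ t, θseq t < θstar → θseq t < θseq (t + 1)) ∧
      Filter.Tendsto θseq Filter.atTop (nhds θstar) := by
  have key : ∀ t, θseq t ≤ θstar →
      (θseq t ≤ θseq (t+1) ∧ θseq (t+1) ≤ θstar ∧
        (θseq t < θstar → θseq t < θseq (t+1))) := by
    intro t ht
    have hit := hiter t
    rcases lt_or_eq_of_le ht with hlt | heq
    · have hnext_le : θseq (t+1) ≤ θstar := by
        by_contra h
        push_neg at h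
        have hgt : θseq t < θseq (t+1) := hlt.trans h
        have h3 := hU3 (θseq t) (hmem t) (θseq (t+1)) (hmem (t+1)) hgt
        have h4 := hneg (θseq (t+1)) (hmem (t+1)) h
        linarith
      have hstrict : θseq t < θseq (t+1) := by
        by_contra h
        push_neg at h
        rcases eq_or_lt_of_le h with heq2 | hlt2
        · have h2 := hU2 (θseq t) (hmem t)
          have h5 := hpos (θseq t) (hmem t) hlt
          rw [heq2] at hit
          linarith
        · have h1 := hU1 (θseq t) (hmem t) (θseq (t+1)) (hmem (t+1)) hlt2
          have h5 := hpos (θseq (t+1)) (hmem (t+1)) (hlt2.trans hlt)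
          linarith
      exact ⟨hstrict.le, hnext_le, fun _ => hstrict⟩
    · have hfix : θseq (t+1) = θstar := by
        rcases lt_trichotomy (θseq (t+1)) θstar with h | h | h
        · exfalso
          have h1 := hU1 (θseq t) (hmem t) (θseq (t+1)) (hmem (t+1)) (heq ▸ h)
          have h5 := hpos (θseq (t+1)) (hmem (t+1)) h
          linarith
        · exact h
        · exfalso
          have h3 := hU3 (θseq t) (hmem t) (θseq (t+1)) (hmem (t+1)) (heq ▸ h)
          have h4 := hneg (θseq (t+1)) (hmem (t+1)) h
          linarith
      refine ⟨?_, hfix.le, fun h => absurd heq h.ne⟩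
      rw [hfix, heq]
  have hle : ∀ t, θseq t ≤ θstar := by
    intro t
    induction t with
    | zero => exact hinit.le
    | succ n ih => exact (key n ih).2.1
  have hmono : Monotone θseq := monotone_nat_of_le_succ (fun n => (key n (hle n)).1)
  have hbdd : BddAbove (Set.range θseq) := ⟨θstar, by rintro x ⟨t, rfl⟩; exact hle t⟩
  have htend : Filter.Tendsto θseq Filter.atTop (nhds (⨆ t, θseq t)) :=
    tendsto_atTop_ciSup hmono hbdd
  set L := ⨆ t, θseq t with hL
  have hLle : L ≤ θstar := ciSup_le hle
  have h0L : θseq 0 ≤ L := le_ciSup hbdd 0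
  have hLmem : L ∈ Θ := hΘ.out (hmem 0) hθstar ⟨h0L, hLle⟩
  have hLeq : L = θstar := by
    by_contra hne
    have hLlt : L < θstar := lt_of_le_of_ne hLle hne
    -- continuity at (L, L)
    have hcw : ContinuousWithinAt (fun p : ℝ × ℝ => U p.1 p.2) (Θ ×ˢ Θ) (L, L) :=
      hUcont (L, L) ⟨hLmem, hLmem⟩
    have hpseq : Filter.Tendsto (fun t => (θseq (t+1), θseq t)) Filter.atTop
        (nhdsWithin (L, L) (Θ ×ˢ Θ)) := by
      rw [tendsto_nhdsWithin_iff]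
      constructor
      · exact (Filter.Tendsto.prodMk_nhds
          (htend.comp (Filter.tendsto_add_atTop_nat 1)) htend)
      · exact Filter.Eventually.of_forall (fun t => ⟨hmem (t+1), hmem t⟩)
    have hUt : Filter.Tendsto (fun t => U (θseq (t+1)) (θseq t)) Filter.atTop
        (nhds (U L L)) := hcw.tendsto.comp hpseq
    have : U L L = 0 := by
      have h0 : Filter.Tendsto (fun _ : ℕ => (0 : ℝ)) Filter.atTop (nhds 0) :=
        tendsto_const_nhds
      have : (fun t => U (θseq (t+1)) (θseq t)) = fun _ : ℕ => (0 : ℝ) := by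
        funext t; exact hiter t
      rw [this] at hUt
      exact tendsto_nhds_unique hUt h0
    have hgL : g L = 0 := by rw [hU2 L hLmem]; exact this
    have := hpos L hLmem hLlt
    linarith
  exact ⟨hmono, fun t _ => hle t, fun t h => (key t (hle t)).2.2 h, hLeq ▸ htend⟩
end

section
/- (FLB-constant US step.) Let Θ ⊆ ℝ be an interval, let g : Θ → ℝ be differentiable and satisfy the sign condition with unique root θ* ∈ Θ, and let b1 < 0 be a constant with g'(θ) ≥ b1 for all θ ∈ Θ. Then for every θt ∈ Θ: if θt < θ* then θt < θt − g(θt)/b1 ≤ θ*, and if θt > θ* then θ* ≤ θt − g(θt)/b1 < θt. -/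
/-- FLB-constant US step: if `g` is differentiable with `g'(θ) ≥ b₁` on the
interval `Θ` for a constant `b₁ < 0`, and `g` satisfies the sign condition with unique root
`θ* ∈ Θ`, then the US update `θt − g(θt)/b₁` moves strictly toward and never beyond `θ*`. -/
theorem stmt_6 (Θ : Set ℝ) (hΘ : Θ.OrdConnected) (g g' : ℝ → ℝ) (b₁ θstar : ℝ)
    (hb₁ : b₁ < 0)
    (hderiv : ∀ θ ∈ Θ, HasDerivWithinAt g (g' θ) Θ θ)
    (hflb : ∀ θ ∈ Θ, b₁ ≤ g' θ)
    (hθstar : θstar ∈ Θ) (hroot : g θstar = 0)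
    (hpos : ∀ θ ∈ Θ, θ < θstar → 0 < g θ)
    (hneg : ∀ θ ∈ Θ, θstar < θ → g θ < 0) :
    ∀ θt ∈ Θ,
      (θt < θstar → θt < θt - g θt / b₁ ∧ θt - g θt / b₁ ≤ θstar) ∧
      (θstar < θt → θstar ≤ θt - g θt / b₁ ∧ θt - g θt / b₁ < θt) := by
  have hconv : Convex ℝ Θ := convex_iff_ordConnected.2 hΘ
  have hmono : MonotoneOn (fun x => g x - b₁ * x) Θ := by
    apply monotoneOn_of_hasDerivWithinAt_nonneg (f' := fun x => g' x - b₁) hconv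
    · exact fun x hx => ((hderiv x hx).continuousWithinAt.sub
        ((continuous_const.mul continuous_id).continuousWithinAt))
    · intro x hx
      exact (((hderiv x (interior_subset hx)).sub
        ((hasDerivWithinAt_id x Θ).const_mul b₁)).mono interior_subset).congr_deriv (by ring)
    · intro x hx
      have := hflb x (interior_subset hx)
      linarith
  intro θt hθt
  constructor
  · intro hlt
    have hg : 0 < g θt := hpos θt hθt hlt
    have hm := hmono hθt hθstar (le_of_lt hlt)
    simp only [hroot] at hm
    -- g θt - b₁ θt ≤ - b₁ θstar  ⇒ g θt ≤ b₁ (θt - θstar)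
    constructor
    · have : g θt / b₁ < 0 := div_neg_of_pos_of_neg hg hb₁
      linarith
    · have h1 : g θt ≤ b₁ * (θt - θstar) := by linarith
      have h2 : g θt / b₁ ≥ θt - θstar := by
        rw [ge_iff_le, le_div_iff_of_neg hb₁]; linarith
      linarith
  · intro hlt
    have hg : g θt < 0 := hneg θt hθt hlt
    have hm := hmono hθstar hθt (le_of_lt hlt)
    simp only [hroot] at hm
    constructor
    · have h1 : b₁ * (θt - θstar) ≤ g θt := by linarith
      have h2 : g θt / b₁ ≤ θt - θstar := by
        rw [div_le_iff_of_neg hb₁]; linarith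
      linarith
    · have : 0 < g θt / b₁ := div_pos_of_neg_of_neg hg hb₁
      linarith
end

section
/- (SLUB construction.) Let Θ ⊆ ℝ be an interval, let g : Θ → ℝ be twice differentiable on Θ, and let b21, b22 be constants with b21 ≤ g''(θ) ≤ b22 for all θ ∈ Θ. For θt ∈ Θ define b2(θ|θt) := b22 if θ ≤ θt and b2(θ|θt) := b21 if θ > θt. Then the function U(θ|θt) := g(θt) + g'(θt)(θ − θt) + (1/2) b2(θ|θt) (θ − θt)² is a U-function for g at θt. -/
/-!
A lower bound `c ≤ g''` makes `g - (c/2)·x²` convex, and its tangent lines at `θt` lie below it;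
rewritten in terms of `g` this is `g θ ≥ g θt + g' θt (θ - θt) + (c/2)(θ - θt)²`. Taking `c = b₂₁`
gives the bound to the right of `θt`; the same argument applied to `-g` with `c = -b₂₂` gives the
reverse bound to the left.
-/

section QuadraticTaylorBound

variable {D : Set ℝ} {g g' g'' : ℝ → ℝ} {c : ℝ}

theorem HasDerivWithinAt.sub_div_two_mul_sq {s : Set ℝ} {y g'y : ℝ}
    (hg : HasDerivWithinAt g g'y s y) (c : ℝ) :
    HasDerivWithinAt (fun x ↦ g x - c / 2 * x ^ 2) (g'y - c * y) s y := by
  refine (hg.fun_sub ((hasDerivWithinAt_pow 2 y).const_mul (c / 2))).congr_deriv ?_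
  push_cast
  ring

theorem convexOn_sub_div_two_mul_sq_of_le_deriv2 (hD : Convex ℝ D)
    (hg : ∀ x ∈ D, HasDerivWithinAt g (g' x) D x)
    (hg' : ∀ x ∈ D, HasDerivWithinAt g' (g'' x) D x) (hc : ∀ x ∈ D, c ≤ g'' x) :
    ConvexOn ℝ D (fun x ↦ g x - c / 2 * x ^ 2) := by
  refine convexOn_of_hasDerivWithinAt2_nonneg (f' := fun x ↦ g' x - c * x)
    (f'' := fun x ↦ g'' x - c) hD ?_ (fun x hx ↦ ?_) (fun x hx ↦ ?_)
    (fun x hx ↦ sub_nonneg.2 (hc x (interior_subset hx)))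
  · exact (HasDerivWithinAt.continuousOn hg).sub (by fun_prop)
  · exact ((hg x (interior_subset hx)).mono interior_subset).sub_div_two_mul_sq c
  · simpa using ((hg' x (interior_subset hx)).mono interior_subset).fun_sub
      ((hasDerivWithinAt_id x _).const_mul c)

theorem add_deriv_mul_add_sq_le_of_le_deriv2 (hD : Convex ℝ D)
    (hg : ∀ x ∈ D, HasDerivWithinAt g (g' x) D x)
    (hg' : ∀ x ∈ D, HasDerivWithinAt g' (g'' x) D x) (hc : ∀ x ∈ D, c ≤ g'' x)
    {x y : ℝ} (hx : x ∈ D) (hy : y ∈ D) :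
    g y + g' y * (x - y) + c / 2 * (x - y) ^ 2 ≤ g x := by
  have hconv := convexOn_sub_div_two_mul_sq_of_le_deriv2 hD hg hg' hc
  have hderiv := (hg y hy).sub_div_two_mul_sq c
  suffices g y - c / 2 * y ^ 2 + (g' y - c * y) * (x - y) ≤ g x - c / 2 * x ^ 2 by
    linarith
  rcases lt_trichotomy x y with hxy | rfl | hxy
  · have := hconv.slope_le_of_hasDerivWithinAt hx hy hxy hderiv
    rw [slope_def_field, div_le_iff₀ (sub_pos.2 hxy)] at this
    linarith
  · simp
  · have := hconv.le_slope_of_hasDerivWithinAt hy hx hxy hderiv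
    rw [slope_def_field, le_div_iff₀ (sub_pos.2 hxy)] at this
    linarith

theorem le_add_deriv_mul_add_sq_of_deriv2_le (hD : Convex ℝ D)
    (hg : ∀ x ∈ D, HasDerivWithinAt g (g' x) D x)
    (hg' : ∀ x ∈ D, HasDerivWithinAt g' (g'' x) D x) (hc : ∀ x ∈ D, g'' x ≤ c)
    {x y : ℝ} (hx : x ∈ D) (hy : y ∈ D) :
    g x ≤ g y + g' y * (x - y) + c / 2 * (x - y) ^ 2 := by
  have := add_deriv_mul_add_sq_le_of_le_deriv2 (g := -g) (g' := -g') (g'' := -g'') (c := -c) hD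
    (fun x hx ↦ (hg x hx).neg) (fun x hx ↦ (hg' x hx).neg)
    (fun x hx ↦ neg_le_neg (hc x hx)) hx hy
  simp only [Pi.neg_apply] at this
  linarith

end QuadraticTaylorBound

/-- SLUB construction: if `g` is twice differentiable on the interval `Θ`
with `b₂₁ ≤ g''(θ) ≤ b₂₂` on `Θ`, then for `θt ∈ Θ` the quadratic
`U(θ|θt) = g(θt) + g'(θt)(θ−θt) + (1/2)·b₂(θ|θt)·(θ−θt)²`,
where `b₂(θ|θt) = b₂₂` if `θ ≤ θt` and `b₂₁` otherwise, is a U-function for `g` at `θt`. -/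
theorem stmt_7 (Θ : Set ℝ) (hΘ : Θ.OrdConnected) (g g' g'' : ℝ → ℝ) (b₂₁ b₂₂ : ℝ)
    (hderiv : ∀ θ ∈ Θ, HasDerivWithinAt g (g' θ) Θ θ)
    (hderiv' : ∀ θ ∈ Θ, HasDerivWithinAt g' (g'' θ) Θ θ)
    (hlb : ∀ θ ∈ Θ, b₂₁ ≤ g'' θ) (hub : ∀ θ ∈ Θ, g'' θ ≤ b₂₂)
    (θt : ℝ) (hθt : θt ∈ Θ)
    (U : ℝ → ℝ)
    (hU : ∀ θ, U θ = g θt + g' θt * (θ - θt) +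
      (1 / 2) * (if θ ≤ θt then b₂₂ else b₂₁) * (θ - θt) ^ 2) :
    (∀ θ ∈ Θ, θ < θt → g θ ≤ U θ) ∧
      g θt = U θt ∧
      (∀ θ ∈ Θ, θt < θ → U θ ≤ g θ) := by
  refine ⟨fun θ hθ hlt ↦ ?_, by simp [hU], fun θ hθ hlt ↦ ?_⟩
  · rw [hU, if_pos hlt.le, one_div_mul_eq_div]
    exact le_add_deriv_mul_add_sq_of_deriv2_le hΘ.convex hderiv hderiv' hub hθ hθt
  · rw [hU, if_neg (not_le.2 hlt), one_div_mul_eq_div]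
    exact add_deriv_mul_add_sq_le_of_le_deriv2 hΘ.convex hderiv hderiv' hlb hθ hθt
end

section
/- (TLB construction.) Let Θ ⊆ ℝ be an interval, let g : Θ → ℝ be three times differentiable on Θ, and let b3 be a constant with g'''(θ) ≥ b3 for all θ ∈ Θ. Then for every θt ∈ Θ, the function U(θ|θt) := g(θt) + g'(θt)(θ − θt) + (1/2) g''(θt)(θ − θt)² + (b3/6)(θ − θt)³ is a U-function for g at θt. -/
/-!
The remainder `h = g - U` satisfies `h(θt) = h'(θt) = h''(θt) = 0` and `h''' = g''' - b₃ ≥ 0`.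
Hence `h''` is monotone and changes sign at `θt`, so `h'` is minimal at `θt`, where it vanishes;
thus `h' ≥ 0`, so `h` is monotone and changes sign at `θt` as well.
-/

open Set

section SignChange

variable {s : Set ℝ} {f f' : ℝ → ℝ} {a : ℝ}

lemma Set.OrdConnected.monotoneOn_of_hasDerivWithinAt_nonneg (hs : s.OrdConnected)
    (hf : ∀ x ∈ s, HasDerivWithinAt f (f' x) s x) (hf' : ∀ x ∈ s, 0 ≤ f' x) :
    MonotoneOn f s :=
  _root_.monotoneOn_of_hasDerivWithinAt_nonneg hs.convex (fun x hx ↦ (hf x hx).continuousWithinAt)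
    (fun x hx ↦ (hf x (interior_subset hx)).mono interior_subset)
    (fun x hx ↦ hf' x (interior_subset hx))

lemma Set.OrdConnected.antitoneOn_of_hasDerivWithinAt_nonpos (hs : s.OrdConnected)
    (hf : ∀ x ∈ s, HasDerivWithinAt f (f' x) s x) (hf' : ∀ x ∈ s, f' x ≤ 0) :
    AntitoneOn f s :=
  _root_.antitoneOn_of_hasDerivWithinAt_nonpos hs.convex (fun x hx ↦ (hf x hx).continuousWithinAt)
    (fun x hx ↦ (hf x (interior_subset hx)).mono interior_subset)
    (fun x hx ↦ hf' x (interior_subset hx))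

lemma MonotoneOn.nonpos_nonneg_of_apply_eq_zero (hf : MonotoneOn f s) (ha : a ∈ s)
    (hfa : f a = 0) :
    (∀ x ∈ s, x ≤ a → f x ≤ 0) ∧ (∀ x ∈ s, a ≤ x → 0 ≤ f x) :=
  ⟨fun _ hx hxa ↦ hfa ▸ hf hx ha hxa, fun _ hx hax ↦ hfa ▸ hf ha hx hax⟩

lemma Set.OrdConnected.nonneg_of_hasDerivWithinAt_of_sign_change (hs : s.OrdConnected)
    (ha : a ∈ s) (hfa : f a = 0) (hf : ∀ x ∈ s, HasDerivWithinAt f (f' x) s x)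
    (hleft : ∀ x ∈ s, x ≤ a → f' x ≤ 0) (hright : ∀ x ∈ s, a ≤ x → 0 ≤ f' x) :
    ∀ x ∈ s, 0 ≤ f x := by
  intro x hx
  rcases le_total x a with hxa | hax
  · have anti : AntitoneOn f (s ∩ Iic a) :=
      (hs.inter ordConnected_Iic).antitoneOn_of_hasDerivWithinAt_nonpos
        (fun y hy ↦ (hf y hy.1).mono inter_subset_left) (fun y hy ↦ hleft y hy.1 hy.2)
    exact hfa ▸ anti ⟨hx, hxa⟩ ⟨ha, mem_Iic.2 le_rfl⟩ hxa
  · have mono : MonotoneOn f (s ∩ Ici a) :=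
      (hs.inter ordConnected_Ici).monotoneOn_of_hasDerivWithinAt_nonneg
        (fun y hy ↦ (hf y hy.1).mono inter_subset_left) (fun y hy ↦ hright y hy.1 hy.2)
    exact hfa ▸ mono ⟨ha, mem_Ici.2 le_rfl⟩ ⟨hx, hax⟩ hax

lemma Set.OrdConnected.nonpos_nonneg_of_third_deriv_nonneg (hs : s.OrdConnected)
    {h h' h'' h''' : ℝ → ℝ} (ha : a ∈ s) (h₀ : h a = 0) (h₁ : h' a = 0) (h₂ : h'' a = 0)
    (hd : ∀ x ∈ s, HasDerivWithinAt h (h' x) s x)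
    (hd' : ∀ x ∈ s, HasDerivWithinAt h' (h'' x) s x)
    (hd'' : ∀ x ∈ s, HasDerivWithinAt h'' (h''' x) s x)
    (h₃ : ∀ x ∈ s, 0 ≤ h''' x) :
    (∀ x ∈ s, x ≤ a → h x ≤ 0) ∧ (∀ x ∈ s, a ≤ x → 0 ≤ h x) := by
  obtain ⟨hleft, hright⟩ :=
    (hs.monotoneOn_of_hasDerivWithinAt_nonneg hd'' h₃).nonpos_nonneg_of_apply_eq_zero ha h₂
  have h'_nonneg := hs.nonneg_of_hasDerivWithinAt_of_sign_change ha h₁ hd' hleft hright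
  exact (hs.monotoneOn_of_hasDerivWithinAt_nonneg hd h'_nonneg).nonpos_nonneg_of_apply_eq_zero
    ha h₀

end SignChange

section TaylorPolynomial

variable (t x : ℝ)

lemma hasDerivAt_taylor_cubic (c₀ c₁ c₂ c₃ : ℝ) :
    HasDerivAt (fun y ↦ c₀ + c₁ * (y - t) + 1 / 2 * c₂ * (y - t) ^ 2 + c₃ / 6 * (y - t) ^ 3)
      (c₁ + c₂ * (x - t) + c₃ / 2 * (x - t) ^ 2) x := by
  have hsub := (hasDerivAt_id' x).sub_const t
  exact ((((hsub.const_mul c₁).const_add c₀).add ((hsub.pow 2).const_mul (1 / 2 * c₂))).add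
    ((hsub.pow 3).const_mul (c₃ / 6))).congr_deriv (by ring)

lemma hasDerivAt_taylor_quadratic (c₁ c₂ c₃ : ℝ) :
    HasDerivAt (fun y ↦ c₁ + c₂ * (y - t) + c₃ / 2 * (y - t) ^ 2) (c₂ + c₃ * (x - t)) x := by
  have hsub := (hasDerivAt_id' x).sub_const t
  exact (((hsub.const_mul c₂).const_add c₁).add ((hsub.pow 2).const_mul (c₃ / 2))).congr_deriv
    (by ring)

lemma hasDerivAt_taylor_linear (c₂ c₃ : ℝ) :
    HasDerivAt (fun y ↦ c₂ + c₃ * (y - t)) c₃ x := by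
  simpa using (((hasDerivAt_id' x).sub_const t).const_mul c₃).const_add c₂

end TaylorPolynomial

/-- TLB construction: if `g` is three times differentiable on the interval `Θ`
with `g'''(θ) ≥ b₃` on `Θ`, then for `θt ∈ Θ` the cubic
`U(θ|θt) = g(θt) + g'(θt)(θ−θt) + (1/2)g''(θt)(θ−θt)² + (b₃/6)(θ−θt)³`
is a U-function for `g` at `θt`. -/
theorem stmt_8 (Θ : Set ℝ) (hΘ : Θ.OrdConnected) (g g' g'' g''' : ℝ → ℝ) (b₃ : ℝ)
    (hderiv : ∀ θ ∈ Θ, HasDerivWithinAt g (g' θ) Θ θ)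
    (hderiv' : ∀ θ ∈ Θ, HasDerivWithinAt g' (g'' θ) Θ θ)
    (hderiv'' : ∀ θ ∈ Θ, HasDerivWithinAt g'' (g''' θ) Θ θ)
    (htlb : ∀ θ ∈ Θ, b₃ ≤ g''' θ)
    (θt : ℝ) (hθt : θt ∈ Θ)
    (U : ℝ → ℝ)
    (hU : ∀ θ, U θ = g θt + g' θt * (θ - θt) + (1 / 2) * g'' θt * (θ - θt) ^ 2 +
      (b₃ / 6) * (θ - θt) ^ 3) :
    (∀ θ ∈ Θ, θ < θt → g θ ≤ U θ) ∧
      g θt = U θt ∧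
      (∀ θ ∈ Θ, θt < θ → U θ ≤ g θ) := by
  have hU' : ∀ θ, HasDerivAt U (g' θt + g'' θt * (θ - θt) + b₃ / 2 * (θ - θt) ^ 2) θ := by
    rw [show U = _ from funext hU]
    exact fun θ ↦ hasDerivAt_taylor_cubic θt θ _ _ _ _
  obtain ⟨hleft, hright⟩ := hΘ.nonpos_nonneg_of_third_deriv_nonneg (a := θt)
    (h := fun θ ↦ g θ - U θ)
    (h' := fun θ ↦ g' θ - (g' θt + g'' θt * (θ - θt) + b₃ / 2 * (θ - θt) ^ 2))
    (h'' := fun θ ↦ g'' θ - (g'' θt + b₃ * (θ - θt)))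
    hθt (by simp [hU]) (by simp) (by simp)
    (fun θ hθ ↦ (hderiv θ hθ).sub (hU' θ).hasDerivWithinAt)
    (fun θ hθ ↦ (hderiv' θ hθ).sub (hasDerivAt_taylor_quadratic θt θ ..).hasDerivWithinAt)
    (fun θ hθ ↦ (hderiv'' θ hθ).sub (hasDerivAt_taylor_linear θt θ ..).hasDerivWithinAt)
    (fun θ hθ ↦ sub_nonneg.mpr (htlb θ hθ))
  refine ⟨fun θ hθ hlt ↦ ?_, by simp [hU], fun θ hθ hlt ↦ ?_⟩
  · linarith [hleft θ hθ hlt.le]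
  · linarith [hright θ hθ hlt.le]
end

section
/- (Theorem 2, linear convergence rate of the FLB-based US algorithm.) Let Θ ⊆ ℝ be an open interval, let g : Θ → ℝ be continuously differentiable, let b : Θ → ℝ be continuous, and let θ* ∈ Θ satisfy g(θ*) = 0 and b(θ*) < 0. Suppose (θ^(t))_{t≥0} is a sequence in Θ with θ^(t) ≠ θ* for all t, θ^(t) → θ*, and g(θ^(t)) + ∫_{θ^(t)}^{θ^(t+1)} b(z) dz = 0 for every t. Then lim_{t→∞} |θ^(t+1) − θ*| / |θ^(t) − θ*| = |1 − g'(θ*)/b(θ*)|; moreover, if b(θ*) < g'(θ*) < 0 then this limit lies strictly between 0 and 1. -/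
/-!
With `B x = ∫_{θ*}^x b`, the US iteration reads `B(θ^(t+1)) = B(θ^(t)) - g(θ^(t))`.
Both `B` and `g` vanish at `θ*`, with derivatives `b(θ*)` and `g'(θ*)` there, so dividing by
`θ^(t) - θ*` gives `B(θ^(t+1)) / (θ^(t) - θ*) → b(θ*) - g'(θ*)`, while dividing by
`θ^(t+1) - θ*` gives `B(θ^(t+1)) / (θ^(t+1) - θ*) → b(θ*)`. The quotient of the two is the
error ratio, which therefore tends to `1 - g'(θ*) / b(θ*)`.
-/

open Filter Topology MeasureTheory

section Ratio

variable {𝕜 : Type*} [NontriviallyNormedField 𝕜]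

theorem HasDerivAt.tendsto_div_sub_of_eq_zero {f : 𝕜 → 𝕜} {f' a : 𝕜} (hf : HasDerivAt f f' a)
    (ha : f a = 0) : Tendsto (fun x => f x / (x - a)) (𝓝[≠] a) (𝓝 f') :=
  hf.tendsto_slope.congr fun x => by simp [slope_def_field, ha]

theorem tendsto_sub_div_sub_of_map_succ_eq_sub {B g : 𝕜 → 𝕜} {B' g' a : 𝕜}
    (hB : HasDerivAt B B' a) (hg : HasDerivAt g g' a) (hBa : B a = 0) (hga : g a = 0)
    (hB' : B' ≠ 0) {u : ℕ → 𝕜} (hu : Tendsto u atTop (𝓝[≠] a))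
    (hrec : ∀ t, B (u (t + 1)) = B (u t) - g (u t)) :
    Tendsto (fun t => (u (t + 1) - a) / (u t - a)) atTop (𝓝 (1 - g' / B')) := by
  have hu_succ : Tendsto (fun t => u (t + 1)) atTop (𝓝[≠] a) :=
    hu.comp (tendsto_add_atTop_nat 1)
  have hnext : Tendsto (fun t => B (u (t + 1)) / (u (t + 1) - a)) atTop (𝓝 B') :=
    (hB.tendsto_div_sub_of_eq_zero hBa).comp hu_succ
  have hcur : Tendsto (fun t => B (u (t + 1)) / (u t - a)) atTop (𝓝 (B' - g')) := by
    refine (((hB.tendsto_div_sub_of_eq_zero hBa).comp hu).sub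
      ((hg.tendsto_div_sub_of_eq_zero hga).comp hu)).congr fun t => ?_
    simp only [Function.comp_apply, hrec t, sub_div]
  have hquot := hcur.div hnext hB'
  rw [sub_div, div_self hB'] at hquot
  refine hquot.congr' ?_
  filter_upwards [hnext.eventually_ne hB', hu.eventually self_mem_nhdsWithin,
    hu_succ.eventually self_mem_nhdsWithin] with t hslope hut hut_succ
  have hBne : B (u (t + 1)) ≠ 0 := fun h => hslope (by rw [h, zero_div])
  have hut' : u t - a ≠ 0 := sub_ne_zero.mpr hut
  have hut_succ' : u (t + 1) - a ≠ 0 := sub_ne_zero.mpr hut_succ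
  simp only [Pi.div_apply]
  field_simp

end Ratio

theorem hasDerivAt_integral_right_of_continuousOn {E : Type*} [NormedAddCommGroup E]
    [NormedSpace ℝ E] [CompleteSpace E] {f : ℝ → E} {s : Set ℝ} (hs : IsOpen s)
    (hf : ContinuousOn f s) {a : ℝ} (ha : a ∈ s) : HasDerivAt (fun x => ∫ z in a..x, f z) (f a) a :=
  intervalIntegral.integral_hasDerivAt_right IntervalIntegrable.refl
    (hf.stronglyMeasurableAtFilter hs a ha) (hf.continuousAt (hs.mem_nhds ha))

theorem abs_one_sub_div_mem_Ioo {b c : ℝ} (hbc : b < c) (hc : c < 0) :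
    0 < |1 - c / b| ∧ |1 - c / b| < 1 := by
  have hb : b < 0 := hbc.trans hc
  have hpos : 0 < c / b := div_pos_of_neg_of_neg hc hb
  have hlt : c / b < 1 := (div_lt_one_of_neg hb).mpr hbc
  rw [abs_of_pos (by linarith)]
  constructor <;> linarith

theorem stmt_9_general (Θ : Set ℝ) (hΘopen : IsOpen Θ) (hΘ : Θ.OrdConnected)
    (g g' b : ℝ → ℝ)
    (hderiv : ∀ θ ∈ Θ, HasDerivAt g (g' θ) θ)
    (hbcont : ContinuousOn b Θ)
    (θstar : ℝ) (hθstar : θstar ∈ Θ) (hroot : g θstar = 0) (hbneg : b θstar < 0)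
    (θ : ℕ → ℝ) (hmem : ∀ t, θ t ∈ Θ) (hne : ∀ t, θ t ≠ θstar)
    (hconv : Filter.Tendsto θ Filter.atTop (nhds θstar))
    (hiter : ∀ t, g (θ t) + ∫ z in (θ t)..(θ (t + 1)), b z = 0) :
    Filter.Tendsto (fun t => |θ (t + 1) - θstar| / |θ t - θstar|) Filter.atTop
      (nhds |1 - g' θstar / b θstar|) ∧
      (b θstar < g' θstar → g' θstar < 0 →
        0 < |1 - g' θstar / b θstar| ∧ |1 - g' θstar / b θstar| < 1) := by
  have hint : ∀ x ∈ Θ, ∀ y ∈ Θ, IntervalIntegrable b volume x y := fun x hx y hy =>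
    (hbcont.mono (hΘ.uIcc_subset hx hy)).intervalIntegrable
  have hrec : ∀ t, ∫ z in θstar..θ (t + 1), b z = (∫ z in θstar..θ t, b z) - g (θ t) := by
    intro t
    rw [← intervalIntegral.integral_add_adjacent_intervals (hint _ hθstar _ (hmem t))
      (hint _ (hmem t) _ (hmem (t + 1)))]
    linarith [hiter t]
  have hθ : Tendsto θ atTop (𝓝[≠] θstar) :=
    tendsto_nhdsWithin_of_tendsto_nhds_of_eventually_within _ hconv (.of_forall hne)
  have hratio := tendsto_sub_div_sub_of_map_succ_eq_sub
    (hasDerivAt_integral_right_of_continuousOn hΘopen hbcont hθstar) (hderiv θstar hθstar)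
    intervalIntegral.integral_same hroot hbneg.ne hθ hrec
  exact ⟨hratio.abs.congr fun t => abs_div _ _, abs_one_sub_div_mem_Ioo⟩

/-- Theorem 2, linear convergence rate of the FLB-based US algorithm:
for a continuously differentiable `g` on an open interval `Θ`, a continuous FLB
function `b` with `b(θ*) < 0`, and a US sequence `θ^(t) → θ*` (with `θ^(t) ≠ θ*`)
satisfying `g(θ^(t)) + ∫_{θ^(t)}^{θ^(t+1)} b(z) dz = 0`, the convergence is linear with
rate `|1 − g'(θ*)/b(θ*)|`; if moreover `b(θ*) < g'(θ*) < 0`, this rate lies in `(0, 1)`. -/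
theorem stmt_9 (Θ : Set ℝ) (hΘopen : IsOpen Θ) (hΘ : Θ.OrdConnected)
    (g g' b : ℝ → ℝ)
    (hderiv : ∀ θ ∈ Θ, HasDerivAt g (g' θ) θ)
    (hcontderiv : ContinuousOn g' Θ)
    (hbcont : ContinuousOn b Θ)
    (θstar : ℝ) (hθstar : θstar ∈ Θ) (hroot : g θstar = 0) (hbneg : b θstar < 0)
    (θ : ℕ → ℝ) (hmem : ∀ t, θ t ∈ Θ) (hne : ∀ t, θ t ≠ θstar)
    (hconv : Filter.Tendsto θ Filter.atTop (nhds θstar))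
    (hiter : ∀ t, g (θ t) + ∫ z in (θ t)..(θ (t + 1)), b z = 0) :
    Filter.Tendsto (fun t => |θ (t + 1) - θstar| / |θ t - θstar|) Filter.atTop
      (nhds |1 - g' θstar / b θstar|) ∧
      (b θstar < g' θstar → g' θstar < 0 →
        0 < |1 - g' θstar / b θstar| ∧ |1 - g' θstar / b θstar| < 1) :=
  stmt_9_general Θ hΘopen hΘ g g' b hderiv hbcont θstar hθstar hroot hbneg θ hmem hne hconv hiter
end

section
/- (Theorem 3, quadratic convergence rate of the SLUB-based US algorithm.) Let Θ ⊆ ℝ be an open interval, let g : Θ → ℝ be twice continuously differentiable, let θ* ∈ Θ satisfy g(θ*) = 0 and g'(θ*) ≠ 0, and let c be a constant. Suppose (θ^(t))_{t≥0} is a sequence in Θ with θ^(t) ≠ θ* for all t, θ^(t) → θ*, and g(θ^(t)) + g'(θ^(t))(θ^(t+1) − θ^(t)) + (c/2)(θ^(t+1) − θ^(t))² = 0 for every t. Then lim_{t→∞} |θ^(t+1) − θ*| / |θ^(t) − θ*|² = |(c − g''(θ*)) / (2 g'(θ*))|; in particular this limit is finite and is positive whenever c ≠ g''(θ*). -/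
/-!
Write `e = θ - θ*` and `e⁺` for the next error. Expanding the U-equation around `θ*` turns it into
`e⁺ · (g'(θ) - c e + (c/2) e⁺) = -(g(θ) - g'(θ) e + (c/2) e²)`. The factor on the left tends to
`g'(θ*) ≠ 0`, while second-order Taylor expansion of `g` and first-order expansion of `g'` at `θ*`
show that the right-hand side is `-((c - g''(θ*))/2) e² + o(e²)`.
-/

open Filter Topology Asymptotics Metric

theorem isLittleO_sub_taylor_two {f f' : ℝ → ℝ} {a f'' : ℝ}
    (hf : ∀ᶠ x in 𝓝 a, HasDerivAt f (f' x) x) (hf' : HasDerivAt f' f'' a) :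
    (fun x => f x - f a - f' a * (x - a) - f'' / 2 * (x - a) ^ 2) =o[𝓝 a]
      fun x => (x - a) ^ 2 := by
  obtain ⟨r, hr, hball⟩ := eventually_nhds_iff_ball.mp hf
  have hnhds : 𝓝[ball a r] a = 𝓝 a := nhdsWithin_eq_nhds.mpr (ball_mem_nhds a hr)
  have hR : ∀ x ∈ ball a r, HasDerivWithinAt (fun y => f y - f' a * (y - a) - f'' / 2 * (y - a) ^ 2)
      (f' x - f' a - f'' * (x - a)) (ball a r) x := by
    intro x hx
    have hlin := ((hasDerivAt_id x).sub_const a).const_mul (f' a)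
    have hsq := (((hasDerivAt_id x).sub_const a).fun_pow 2).const_mul (f'' / 2)
    refine (((hball x hx).fun_sub hlin).fun_sub hsq).hasDerivWithinAt.congr_deriv ?_
    simp only [id]
    ring
  have h := (convex_ball a r).isLittleO_pow_succ_real (mem_ball_self hr) hR (n := 1)
    (by simpa [hnhds, mul_comm] using hf'.isLittleO)
  rw [hnhds] at h
  exact h.congr_left fun x => by ring

theorem tendsto_sub_deriv_mul_div_sq {f f' : ℝ → ℝ} {a f'' : ℝ}
    (hf : ∀ᶠ x in 𝓝 a, HasDerivAt f (f' x) x) (hf' : HasDerivAt f' f'' a) :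
    Tendsto (fun x => (f x - f a - f' x * (x - a)) / (x - a) ^ 2) (𝓝[≠] a)
      (𝓝 (-(f'' / 2))) := by
  have hlin : (fun x => (f' x - f' a - (x - a) • f'') * (x - a)) =o[𝓝 a]
      fun x => (x - a) ^ 2 := by
    simpa only [sq] using hf'.isLittleO.mul_isBigO (isBigO_refl (fun x => x - a) _)
  have h := (((isLittleO_sub_taylor_two hf hf').sub hlin).tendsto_div_nhds_zero.mono_left
    (nhdsWithin_le_nhds (s := {a}ᶜ))).add_const (-(f'' / 2))
  rw [zero_add] at h
  refine h.congr' (eventually_nhdsWithin_of_forall fun x (hx : x ≠ a) => ?_)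
  have : x - a ≠ 0 := sub_ne_zero.mpr hx
  simp only [smul_eq_mul]
  field_simp
  ring

theorem tendsto_div_sq_of_quadratic_step {g g' : ℝ → ℝ} {a g'' c : ℝ}
    (hg : ∀ᶠ x in 𝓝 a, HasDerivAt g (g' x) x) (hg' : HasDerivAt g' g'' a)
    (hroot : g a = 0) (hg'a : g' a ≠ 0) {θ : ℕ → ℝ} (hθ : Tendsto θ atTop (𝓝[≠] a))
    (hstep : ∀ t, g (θ t) + g' (θ t) * (θ (t + 1) - θ t) + (c / 2) * (θ (t + 1) - θ t) ^ 2 = 0) :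
    Tendsto (fun t => (θ (t + 1) - a) / (θ t - a) ^ 2) atTop
      (𝓝 (-((c - g'') / (2 * g' a)))) := by
  obtain ⟨hθa, hθne⟩ := tendsto_nhdsWithin_iff.mp hθ
  have he : Tendsto (fun t => θ t - a) atTop (𝓝 0) := by
    simpa using hθa.sub_const a
  have he' : Tendsto (fun t => θ (t + 1) - a) atTop (𝓝 0) :=
    he.comp (tendsto_add_atTop_nat 1)
  have hQ : Tendsto (fun t => (g (θ t) - g a - g' (θ t) * (θ t - a)) / (θ t - a) ^ 2) atTop
      (𝓝 (-(g'' / 2))) :=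
    (tendsto_sub_deriv_mul_div_sq hg hg').comp hθ
  have hD : Tendsto (fun t => g' (θ t) - c * (θ t - a) + c / 2 * (θ (t + 1) - a)) atTop
      (𝓝 (g' a)) := by
    simpa using ((hg'.continuousAt.tendsto.comp hθa).sub (he.const_mul c)).add
      (he'.const_mul (c / 2))
  have hlim : -(-(g'' / 2) + c / 2) / g' a = -((c - g'') / (2 * g' a)) := by ring
  rw [← hlim]
  refine ((hQ.add_const (c / 2)).neg.div hD hg'a).congr' ?_
  filter_upwards [hD.eventually_ne hg'a, hθne] with t hDt hθt
  have he0 : θ t - a ≠ 0 := sub_ne_zero.mpr hθt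
  simp only [hroot, sub_zero, Pi.div_apply]
  rw [div_eq_div_iff hDt (pow_ne_zero 2 he0)]
  field_simp
  linear_combination (-2) * hstep t

theorem stmt_10_general (Θ : Set ℝ) (hΘopen : IsOpen Θ)
    (g g' g'' : ℝ → ℝ) (c : ℝ)
    (hderiv : ∀ θ ∈ Θ, HasDerivAt g (g' θ) θ)
    (hderiv' : ∀ θ ∈ Θ, HasDerivAt g' (g'' θ) θ)
    (θstar : ℝ) (hθstar : θstar ∈ Θ) (hroot : g θstar = 0) (hg' : g' θstar ≠ 0)
    (θ : ℕ → ℝ) (hne : ∀ t, θ t ≠ θstar)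
    (hconv : Filter.Tendsto θ Filter.atTop (nhds θstar))
    (hiter : ∀ t, g (θ t) + g' (θ t) * (θ (t + 1) - θ t) +
      (c / 2) * (θ (t + 1) - θ t) ^ 2 = 0) :
    Filter.Tendsto (fun t => |θ (t + 1) - θstar| / |θ t - θstar| ^ 2) Filter.atTop
      (nhds |(c - g'' θstar) / (2 * g' θstar)|) ∧
      (c ≠ g'' θstar → 0 < |(c - g'' θstar) / (2 * g' θstar)|) := by
  have hlocal : ∀ᶠ x in 𝓝 θstar, HasDerivAt g (g' x) x :=
    eventually_of_mem (hΘopen.mem_nhds hθstar) hderiv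
  have hθ : Tendsto θ atTop (𝓝[≠] θstar) :=
    tendsto_nhdsWithin_iff.mpr ⟨hconv, .of_forall hne⟩
  have hrate := (tendsto_div_sq_of_quadratic_step hlocal (hderiv' θstar hθstar) hroot hg' hθ
    hiter).abs
  rw [abs_neg] at hrate
  refine ⟨by simpa only [abs_div, abs_pow] using hrate, fun hc => ?_⟩
  exact abs_pos.mpr (div_ne_zero (sub_ne_zero.mpr hc) (mul_ne_zero two_ne_zero hg'))

/-- Theorem 3, quadratic convergence rate of the SLUB-based US algorithm:
for a twice continuously differentiable `g` on an open interval `Θ` with `g(θ*) = 0`,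
`g'(θ*) ≠ 0`, and a US sequence `θ^(t) → θ*` (with `θ^(t) ≠ θ*`) solving the quadratic
U-equation with constant `c`, the convergence is quadratic with limit
`|(c − g''(θ*)) / (2 g'(θ*))|`, which is positive whenever `c ≠ g''(θ*)`. -/
theorem stmt_10 (Θ : Set ℝ) (hΘopen : IsOpen Θ) (hΘ : Θ.OrdConnected)
    (g g' g'' : ℝ → ℝ) (c : ℝ)
    (hderiv : ∀ θ ∈ Θ, HasDerivAt g (g' θ) θ)
    (hderiv' : ∀ θ ∈ Θ, HasDerivAt g' (g'' θ) θ)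
    (hcont'' : ContinuousOn g'' Θ)
    (θstar : ℝ) (hθstar : θstar ∈ Θ) (hroot : g θstar = 0) (hg' : g' θstar ≠ 0)
    (θ : ℕ → ℝ) (hmem : ∀ t, θ t ∈ Θ) (hne : ∀ t, θ t ≠ θstar)
    (hconv : Filter.Tendsto θ Filter.atTop (nhds θstar))
    (hiter : ∀ t, g (θ t) + g' (θ t) * (θ (t + 1) - θ t) +
      (c / 2) * (θ (t + 1) - θ t) ^ 2 = 0) :
    Filter.Tendsto (fun t => |θ (t + 1) - θstar| / |θ t - θstar| ^ 2) Filter.atTop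
      (nhds |(c - g'' θstar) / (2 * g' θstar)|) ∧
      (c ≠ g'' θstar → 0 < |(c - g'' θstar) / (2 * g' θstar)|) :=
  stmt_10_general Θ hΘopen g g' g'' c hderiv hderiv' θstar hθstar hroot hg' θ hne hconv hiter
end

section
/- (Theorem 4, cubic convergence rate of the TLB-based US algorithm.) Let Θ ⊆ ℝ be an open interval, let g : Θ → ℝ be three times continuously differentiable, let θ* ∈ Θ satisfy g(θ*) = 0 and g'(θ*) ≠ 0, and let b3 be a constant. Suppose (θ^(t))_{t≥0} is a sequence in Θ with θ^(t) ≠ θ* for all t, θ^(t) → θ*, and g(θ^(t)) + g'(θ^(t))(θ^(t+1) − θ^(t)) + (g''(θ^(t))/2)(θ^(t+1) − θ^(t))² + (b3/6)(θ^(t+1) − θ^(t))³ = 0 for every t. Then lim_{t→∞} |θ^(t+1) − θ*| / |θ^(t) − θ*|³ = |(b3 − g'''(θ*)) / (6 g'(θ*))|; in particular this limit is finite and is positive whenever b3 ≠ g'''(θ*). -/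
/-!
Write `e = θ^(t) - θ*` and `e' = θ^(t+1) - θ*`. Evaluating the cubic of the U-equation at `θ*`
turns the equation into `e' · M_t = (b₃/6) e³ - ψ(θ^(t))`, with a slope `M_t → g'(θ*)` and
`ψ(x) = g x - g' x (x - θ*) + g'' x (x - θ*)² / 2` the quadratic Taylor polynomial of `g` at `x`
evaluated at `θ*`. Since `ψ' x = g''' x (x - θ*)² / 2`, L'Hôpital gives
`ψ(x) / (x - θ*)³ → g'''(θ*) / 6`, hence `e' / e³ → (b₃ - g'''(θ*)) / (6 g'(θ*))`.
-/

open Filter Topology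

section TaylorRemainder

variable {g g' g'' g''' : ℝ → ℝ} {a : ℝ}

theorem hasDerivAt_taylor_remainder {x : ℝ} (hg : HasDerivAt g (g' x) x)
    (hg' : HasDerivAt g' (g'' x) x) (hg'' : HasDerivAt g'' (g''' x) x) :
    HasDerivAt (fun y => g y - g' y * (y - a) + g'' y / 2 * (y - a) ^ 2)
      (g''' x / 2 * (x - a) ^ 2) x := by
  have hlin : HasDerivAt (fun y : ℝ => y - a) 1 x := (hasDerivAt_id x).sub_const a
  refine ((hg.sub (hg'.mul hlin)).add ((hg''.div_const 2).mul (hlin.pow 2))).congr_deriv ?_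
  simp only [Pi.pow_apply]
  push_cast
  ring

theorem tendsto_taylor_remainder_div_cube (hg : ∀ᶠ x in 𝓝 a, HasDerivAt g (g' x) x)
    (hg' : ∀ᶠ x in 𝓝 a, HasDerivAt g' (g'' x) x) (hg'' : ∀ᶠ x in 𝓝 a, HasDerivAt g'' (g''' x) x)
    (hc : ContinuousAt g''' a) :
    Tendsto (fun x => (g x - g' x * (x - a) + g'' x / 2 * (x - a) ^ 2 - g a) / (x - a) ^ 3)
      (𝓝[≠] a) (𝓝 (g''' a / 6)) := by
  have hderiv : ∀ᶠ x in 𝓝 a, HasDerivAt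
      (fun y => g y - g' y * (y - a) + g'' y / 2 * (y - a) ^ 2 - g a)
      (g''' x / 2 * (x - a) ^ 2) x := by
    filter_upwards [hg, hg', hg''] with x h h' h''
    exact (hasDerivAt_taylor_remainder h h' h'').sub_const (g a)
  have hcube : ∀ x, HasDerivAt (fun y => (y - a) ^ 3) (3 * (x - a) ^ 2) x := fun x => by
    simpa using ((hasDerivAt_id' x).sub_const a).fun_pow 3
  apply HasDerivAt.lhopital_zero_nhdsNE (hderiv.filter_mono nhdsWithin_le_nhds)
    (Eventually.of_forall hcube)
  · filter_upwards [self_mem_nhdsWithin] with x hx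
    have : x - a ≠ 0 := sub_ne_zero.mpr hx
    positivity
  · refine tendsto_nhdsWithin_of_tendsto_nhds ?_
    simpa using (hderiv.self_of_nhds.continuousAt).tendsto
  · refine tendsto_nhdsWithin_of_tendsto_nhds ?_
    simpa using ((continuous_sub_right a).fun_pow 3).tendsto a
  · refine ((hc.tendsto.div_const 6).mono_left nhdsWithin_le_nhds).congr' ?_
    filter_upwards [self_mem_nhdsWithin] with x hx
    have : x - a ≠ 0 := sub_ne_zero.mpr hx
    field_simp
    ring

end TaylorRemainder

/-- The divided difference `(P y - P a) / (y - a)` of the U-cubic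
`P y = G₀ + G₁ (y - x) + G₂ (y - x)² / 2 + b (y - x)³ / 6`, written in `e = x - a`, `e' = y - a`. -/
noncomputable def cubicStepSlope (G₁ G₂ b e e' : ℝ) : ℝ :=
  G₁ + G₂ / 2 * (e' - 2 * e) + b / 6 * (e' ^ 2 - 3 * e' * e + 3 * e ^ 2)

theorem cubicStepSlope_mul_error {G₀ G₁ G₂ b x y a : ℝ}
    (hU : G₀ + G₁ * (y - x) + G₂ / 2 * (y - x) ^ 2 + b / 6 * (y - x) ^ 3 = 0) :
    cubicStepSlope G₁ G₂ b (x - a) (y - a) * (y - a) =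
      b / 6 * (x - a) ^ 3 - (G₀ - G₁ * (x - a) + G₂ / 2 * (x - a) ^ 2) := by
  unfold cubicStepSlope
  linear_combination hU

theorem tendsto_cubicStepSlope {α : Type*} {l : Filter α} {G₁ G₂ e e' : α → ℝ} {c d : ℝ}
    (b : ℝ) (h₁ : Tendsto G₁ l (𝓝 c)) (h₂ : Tendsto G₂ l (𝓝 d)) (he : Tendsto e l (𝓝 0))
    (he' : Tendsto e' l (𝓝 0)) :
    Tendsto (fun i => cubicStepSlope (G₁ i) (G₂ i) b (e i) (e' i)) l (𝓝 c) := by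
  have := (h₁.add ((h₂.div_const 2).mul (he'.sub (he.const_mul 2)))).add
    ((((he'.pow 2).sub ((he'.const_mul 3).mul he)).add ((he.pow 2).const_mul 3)).const_mul (b / 6))
  simpa [cubicStepSlope] using this

theorem tendsto_cubic_step_error_ratio {g g' g'' g''' : ℝ → ℝ} {a b : ℝ}
    (hg : ∀ᶠ x in 𝓝 a, HasDerivAt g (g' x) x)
    (hg' : ∀ᶠ x in 𝓝 a, HasDerivAt g' (g'' x) x) (hg'' : ∀ᶠ x in 𝓝 a, HasDerivAt g'' (g''' x) x)
    (hc : ContinuousAt g''' a) (hroot : g a = 0) (hg'a : g' a ≠ 0) {θ : ℕ → ℝ}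
    (hconv : Tendsto θ atTop (𝓝[≠] a))
    (hiter : ∀ᶠ t in atTop, g (θ t) + g' (θ t) * (θ (t + 1) - θ t) +
      g'' (θ t) / 2 * (θ (t + 1) - θ t) ^ 2 + b / 6 * (θ (t + 1) - θ t) ^ 3 = 0) :
    Tendsto (fun t => (θ (t + 1) - a) / (θ t - a) ^ 3) atTop
      (𝓝 ((b - g''' a) / (6 * g' a))) := by
  set M : ℕ → ℝ := fun t => cubicStepSlope (g' (θ t)) (g'' (θ t)) b (θ t - a) (θ (t + 1) - a)
  have hθ : Tendsto θ atTop (𝓝 a) := tendsto_nhds_of_tendsto_nhdsWithin hconv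
  have he : Tendsto (fun t => θ t - a) atTop (𝓝 0) := by simpa using hθ.sub_const a
  have hM : Tendsto M atTop (𝓝 (g' a)) :=
    tendsto_cubicStepSlope b ((hg'.self_of_nhds.continuousAt).tendsto.comp hθ)
      ((hg''.self_of_nhds.continuousAt).tendsto.comp hθ) he
      (he.comp (tendsto_add_atTop_nat 1))
  have hψ : Tendsto (fun t => b / 6 - (g (θ t) - g' (θ t) * (θ t - a)
      + g'' (θ t) / 2 * (θ t - a) ^ 2 - g a) / (θ t - a) ^ 3) atTop (𝓝 (b / 6 - g''' a / 6)) :=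
    tendsto_const_nhds.sub ((tendsto_taylor_remainder_div_cube hg hg' hg'' hc).comp hconv)
  have hval : (b / 6 - g''' a / 6) / g' a = (b - g''' a) / (6 * g' a) := by
    field_simp
  rw [← hval]
  refine (hψ.div hM hg'a).congr' ?_
  filter_upwards [hiter, hM.eventually_ne hg'a, hconv self_mem_nhdsWithin] with t hU hMt hθt
  have herr : θ t - a ≠ 0 := sub_ne_zero.mpr hθt
  have hstep : M t * (θ (t + 1) - a) = _ := cubicStepSlope_mul_error hU
  rw [Pi.div_apply, hroot, sub_zero, div_eq_div_iff hMt (pow_ne_zero 3 herr), mul_comm _ (M t),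
    hstep]
  field_simp

theorem stmt_11_general (Θ : Set ℝ) (hΘopen : IsOpen Θ)
    (g g' g'' g''' : ℝ → ℝ) (b₃ : ℝ)
    (hderiv : ∀ θ ∈ Θ, HasDerivAt g (g' θ) θ)
    (hderiv' : ∀ θ ∈ Θ, HasDerivAt g' (g'' θ) θ)
    (hderiv'' : ∀ θ ∈ Θ, HasDerivAt g'' (g''' θ) θ)
    (hcont''' : ContinuousOn g''' Θ)
    (θstar : ℝ) (hθstar : θstar ∈ Θ) (hroot : g θstar = 0) (hg' : g' θstar ≠ 0)
    (θ : ℕ → ℝ) (hne : ∀ t, θ t ≠ θstar)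
    (hconv : Filter.Tendsto θ Filter.atTop (nhds θstar))
    (hiter : ∀ t, g (θ t) + g' (θ t) * (θ (t + 1) - θ t) +
      (g'' (θ t) / 2) * (θ (t + 1) - θ t) ^ 2 +
      (b₃ / 6) * (θ (t + 1) - θ t) ^ 3 = 0) :
    Filter.Tendsto (fun t => |θ (t + 1) - θstar| / |θ t - θstar| ^ 3) Filter.atTop
      (nhds |(b₃ - g''' θstar) / (6 * g' θstar)|) ∧
      (b₃ ≠ g''' θstar → 0 < |(b₃ - g''' θstar) / (6 * g' θstar)|) := by
  have hΘ : Θ ∈ 𝓝 θstar := hΘopen.mem_nhds hθstar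
  have hratio := tendsto_cubic_step_error_ratio (eventually_of_mem hΘ hderiv)
    (eventually_of_mem hΘ hderiv') (eventually_of_mem hΘ hderiv'') (hcont'''.continuousAt hΘ)
    hroot hg' (tendsto_nhdsWithin_iff.mpr ⟨hconv, .of_forall hne⟩) (.of_forall hiter)
  refine ⟨by simpa only [abs_div, abs_pow] using hratio.abs, fun hb => ?_⟩
  exact abs_pos.mpr (div_ne_zero (sub_ne_zero.mpr hb) (mul_ne_zero (by norm_num) hg'))

/-- Theorem 4, cubic convergence rate of the TLB-based US algorithm:
for a three times continuously differentiable `g` on an open interval `Θ` with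
`g(θ*) = 0`, `g'(θ*) ≠ 0`, and a US sequence `θ^(t) → θ*` (with `θ^(t) ≠ θ*`) solving
the cubic U-equation with TLB constant `b₃`, the convergence is cubic with limit
`|(b₃ − g'''(θ*)) / (6 g'(θ*))|`, which is positive whenever `b₃ ≠ g'''(θ*)`. -/
theorem stmt_11 (Θ : Set ℝ) (hΘopen : IsOpen Θ) (hΘ : Θ.OrdConnected)
    (g g' g'' g''' : ℝ → ℝ) (b₃ : ℝ)
    (hderiv : ∀ θ ∈ Θ, HasDerivAt g (g' θ) θ)
    (hderiv' : ∀ θ ∈ Θ, HasDerivAt g' (g'' θ) θ)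
    (hderiv'' : ∀ θ ∈ Θ, HasDerivAt g'' (g''' θ) θ)
    (hcont''' : ContinuousOn g''' Θ)
    (θstar : ℝ) (hθstar : θstar ∈ Θ) (hroot : g θstar = 0) (hg' : g' θstar ≠ 0)
    (θ : ℕ → ℝ) (hmem : ∀ t, θ t ∈ Θ) (hne : ∀ t, θ t ≠ θstar)
    (hconv : Filter.Tendsto θ Filter.atTop (nhds θstar))
    (hiter : ∀ t, g (θ t) + g' (θ t) * (θ (t + 1) - θ t) +
      (g'' (θ t) / 2) * (θ (t + 1) - θ t) ^ 2 +
      (b₃ / 6) * (θ (t + 1) - θ t) ^ 3 = 0) :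
    Filter.Tendsto (fun t => |θ (t + 1) - θstar| / |θ t - θstar| ^ 3) Filter.atTop
      (nhds |(b₃ - g''' θstar) / (6 * g' θstar)|) ∧
      (b₃ ≠ g''' θstar → 0 < |(b₃ - g''' θstar) / (6 * g' θstar)|) :=
  stmt_11_general Θ hΘopen g g' g'' g''' b₃ hderiv hderiv' hderiv'' hcont''' θstar hθstar hroot hg'
    θ hne hconv hiter
end

section
/- For every real θ > 1, the series ∑_{n=2}^{∞} (log n) · n^{−θ} converges and satisfies ∑_{n=2}^{∞} (log n) · n^{−θ} < (log 2 + 1)/(θ−1)² + log 2. -/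
/-!
The summand `log x * x ^ (-θ)` decreases on `[exp θ⁻¹, ∞) ⊇ [3, ∞)`, so by the integral test
the terms with `n ≥ 4` sum to at most `∫_3^∞ log x * x ^ (-θ) dx = 3 ^ (-t) (s + 1) / t²`, where
`t = θ - 1` and `s = t log 3 = log (3 ^ t)`. Adding the term at `n = 3` gives
`e^{-s} (t² log 3 / 3 + s + 1) / t² ≤ e^{-s} (1 + s + s² / 2) / t² ≤ 1 / t²`, and the term at
`n = 2` is less than `log 2`.
-/

open Real Set

/-- For `θ > 1` this is `∫ t in Ioi x, log t * t ^ (-θ)`. -/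
noncomputable def logRpowTail (θ x : ℝ) : ℝ :=
  x ^ (1 - θ) * ((θ - 1) * log x + 1) / (θ - 1) ^ 2

lemma hasDerivAt_logRpowTail {θ x : ℝ} (hθ : θ ≠ 1) (hx : 0 < x) :
    HasDerivAt (logRpowTail θ) (-(log x * x ^ (-θ))) x := by
  refine (((hasDerivAt_rpow_const (p := 1 - θ) (Or.inl hx.ne')).mul
    (((hasDerivAt_log hx.ne').const_mul (θ - 1)).add_const 1)).div_const
      ((θ - 1) ^ 2)).congr_deriv ?_
  have hθ' : θ - 1 ≠ 0 := sub_ne_zero.2 hθ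
  rw [show 1 - θ - 1 = -θ by ring, show 1 - θ = 1 + -θ by ring, rpow_add hx, rpow_one]
  field_simp
  ring

lemma logRpowTail_nonneg {θ x : ℝ} (hθ : 1 ≤ θ) (hx : 1 ≤ x) : 0 ≤ logRpowTail θ x := by
  have : 0 ≤ (θ - 1) * log x := mul_nonneg (by linarith) (log_nonneg hx)
  unfold logRpowTail
  positivity

lemma antitoneOn_log_mul_rpow_neg {θ : ℝ} (hθ : 0 < θ) :
    AntitoneOn (fun x => log x * x ^ (-θ)) (Ici (exp θ⁻¹)) := by
  have hpos : ∀ x ∈ Ici (exp θ⁻¹), 0 < x := fun x hx => (exp_pos _).trans_le hx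
  have hderiv : ∀ x ∈ Ici (exp θ⁻¹), HasDerivAt (fun x => log x * x ^ (-θ))
      (x ^ (-θ - 1) * (1 - θ * log x)) x := fun x hx => by
    have hx := hpos x hx
    refine ((hasDerivAt_log hx.ne').mul
      (hasDerivAt_rpow_const (p := -θ) (Or.inl hx.ne'))).congr_deriv ?_
    rw [rpow_sub_one hx.ne']
    field_simp
    ring
  refine antitoneOn_of_hasDerivWithinAt_nonpos (convex_Ici _)
    (fun x hx => (hderiv x hx).continuousAt.continuousWithinAt)
    (fun x hx => (hderiv x (interior_subset hx)).hasDerivWithinAt) fun x hx => ?_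
  rw [interior_Ici, mem_Ioi] at hx
  have hx0 : 0 < x := (exp_pos _).trans hx
  have hlog : θ⁻¹ < log x := (lt_log_iff_exp_lt hx0).2 hx
  have : 1 < θ * log x := by rwa [inv_lt_iff_one_lt_mul₀' hθ] at hlog
  exact mul_nonpos_of_nonneg_of_nonpos (rpow_nonneg hx0.le _) (by linarith)

lemma sum_log_mul_rpow_neg_le_logRpowTail {θ a : ℝ} (hθ : 1 < θ) (ha : exp θ⁻¹ ≤ a)
    (N : ℕ) :
    ∑ i ∈ Finset.range N, log (a + ↑(i + 1)) * (a + ↑(i + 1)) ^ (-θ) ≤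
      logRpowTail θ a := by
  have ha0 : 0 < a := (exp_pos _).trans_le ha
  have haN : a ≤ a + N := le_add_of_nonneg_right (Nat.cast_nonneg N)
  have hderiv : ∀ x ∈ uIcc a (a + N), HasDerivAt (logRpowTail θ) (-(log x * x ^ (-θ))) x :=
    fun x hx => hasDerivAt_logRpowTail hθ.ne' (ha0.trans_le (uIcc_of_le haN ▸ hx).1)
  have hanti : AntitoneOn (fun x => log x * x ^ (-θ)) (Icc a (a + N)) :=
    (antitoneOn_log_mul_rpow_neg (zero_lt_one.trans hθ)).mono
      (Icc_subset_Ici_self.trans (Ici_subset_Ici.2 ha))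
  have hint : IntervalIntegrable (fun x => -(log x * x ^ (-θ))) MeasureTheory.volume a (a + N) :=
    (AntitoneOn.intervalIntegrable (by rwa [uIcc_of_le haN])).neg
  calc ∑ i ∈ Finset.range N, log (a + ↑(i + 1)) * (a + ↑(i + 1)) ^ (-θ)
      ≤ ∫ x in a..a + N, log x * x ^ (-θ) := hanti.sum_le_integral
    _ = logRpowTail θ a - logRpowTail θ (a + N) := by
      rw [← neg_sub, ← intervalIntegral.integral_eq_sub_of_hasDerivAt hderiv hint,
        intervalIntegral.integral_neg, neg_neg]
    _ ≤ logRpowTail θ a :=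
      sub_le_self _
        (logRpowTail_nonneg hθ.le ((one_le_exp (by positivity)).trans (ha.trans haN)))

lemma log_mul_rpow_neg_lt_log {θ x : ℝ} (hθ : 0 < θ) (hx : 1 < x) :
    log x * x ^ (-θ) < log x :=
  mul_lt_of_lt_one_right (log_pos hx) (rpow_lt_one_of_one_lt_of_neg hx (neg_neg_of_pos hθ))

lemma log_mul_rpow_neg_three_add_logRpowTail_le {θ : ℝ} (hθ : 1 < θ) :
    log 3 * 3 ^ (-θ) + logRpowTail θ 3 ≤ 1 / (θ - 1) ^ 2 := by
  set t := θ - 1 with ht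
  have ht0 : 0 < t := sub_pos.2 hθ
  have hlog : 1 < log 3 := by
    rw [lt_log_iff_exp_lt three_pos]
    linarith [exp_one_lt_d9]
  have hpow : (3 : ℝ) ^ (1 - θ) = exp (-(t * log 3)) := by
    rw [rpow_def_of_pos three_pos, ht]
    ring_nf
  have hpow' : (3 : ℝ) ^ (-θ) = exp (-(t * log 3)) / 3 := by
    rw [← hpow, ← rpow_sub_one three_pos.ne']
    ring_nf
  -- `t² log 3 / 3 ≤ (t log 3)² / 2` since `log 3 ≥ 2 / 3`
  have hexp : t ^ 2 * log 3 / 3 + t * log 3 + 1 ≤ exp (t * log 3) := by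
    nlinarith [quadratic_le_exp_of_nonneg (mul_nonneg ht0.le (by linarith : 0 ≤ log 3)),
      mul_nonneg (sq_nonneg t) (by linarith : 0 ≤ log 3 - 1)]
  have hexpand : (log 3 * 3 ^ (-θ) + logRpowTail θ 3) * t ^ 2 =
      exp (-(t * log 3)) * (t ^ 2 * log 3 / 3 + t * log 3 + 1) := by
    rw [logRpowTail, hpow, hpow', ← ht]
    field_simp
    ring
  rw [le_div_iff₀ (by positivity), hexpand]
  calc exp (-(t * log 3)) * (t ^ 2 * log 3 / 3 + t * log 3 + 1)
      ≤ exp (-(t * log 3)) * exp (t * log 3) := mul_le_mul_of_nonneg_left hexp (exp_pos _).le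
    _ = 1 := by rw [← exp_add, neg_add_cancel, exp_zero]

/-- for `θ > 1`, the series `∑_{n=2}^∞ (log n)·n^{−θ}` (which equals
`−Z'(θ)`) converges and is `< (log 2 + 1)/(θ−1)² + log 2`. -/
theorem stmt_17 (θ : ℝ) (hθ : 1 < θ) :
    Summable (fun n : ℕ => Real.log ((n : ℝ) + 2) * ((n : ℝ) + 2) ^ (-θ)) ∧
      ∑' n : ℕ, Real.log ((n : ℝ) + 2) * ((n : ℝ) + 2) ^ (-θ) <
        (Real.log 2 + 1) / (θ - 1) ^ 2 + Real.log 2 := by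
  set g : ℕ → ℝ := fun n => log ((n : ℝ) + 2) * ((n : ℝ) + 2) ^ (-θ) with hg
  have hg_nonneg : ∀ n, 0 ≤ g n := fun n =>
    mul_nonneg (log_nonneg (by linarith [(Nat.cast_nonneg n : (0:ℝ) ≤ n)])) (by positivity)
  have h3 : exp θ⁻¹ ≤ 3 := calc
    exp θ⁻¹ ≤ exp 1 := exp_le_exp.2 (inv_le_one_of_one_le₀ hθ.le)
    _ ≤ 3 := by linarith [exp_one_lt_d9]
  have htail : ∀ N, ∑ n ∈ Finset.range N, g (n + 2) ≤ logRpowTail θ 3 := fun N => by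
    refine (Finset.sum_congr rfl fun n _ => ?_).trans_le
      (sum_log_mul_rpow_neg_le_logRpowTail hθ h3 N)
    simp only [hg]
    rw [show ((n + 2 : ℕ) : ℝ) + 2 = 3 + ((n + 1 : ℕ) : ℝ) by push_cast; ring]
  have hsum : Summable g :=
    (summable_nat_add_iff 2).1 (summable_of_sum_range_le (fun n => hg_nonneg _) htail)
  refine ⟨hsum, ?_⟩
  rw [← hsum.sum_add_tsum_nat_add 2]
  calc ∑ i ∈ Finset.range 2, g i + ∑' i, g (i + 2) ≤ g 0 + g 1 + logRpowTail θ 3 := by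
        simpa [Finset.sum_range_succ] using tsum_le_of_sum_range_le (fun n => hg_nonneg _) htail
    _ = log 2 * 2 ^ (-θ) + (log 3 * 3 ^ (-θ) + logRpowTail θ 3) := by norm_num [hg, add_assoc]
    _ < log 2 + 1 / (θ - 1) ^ 2 :=
        add_lt_add_of_lt_of_le (log_mul_rpow_neg_lt_log (by linarith) one_lt_two)
          (log_mul_rpow_neg_three_add_logRpowTail_le hθ)
    _ ≤ (log 2 + 1) / (θ - 1) ^ 2 + log 2 := by
      rw [add_div]
      linarith [div_nonneg (log_nonneg one_le_two) (sq_nonneg (θ - 1))]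
end

section
/- (Appendix C, inequality (C.3).) For every real θ > 1, the series ∑_{n=2}^{∞} (log n)² · n^{−θ} converges and satisfies ∑_{n=2}^{∞} (log n)² · n^{−θ} < (log 2)²/(θ−1) + (2/(θ−1)) · [ (log 2 + 1)/(θ−1)² + log 2 ]. -/
/-!
For `x ∈ [n - 1, n]` with `n ≥ 2` we have `n ≤ 2x`, so
`(log n)² n^{-θ} ≤ ∫_{n-1}^{n} (log x + log 2)² x^{-θ} dx`. This integrand has the elementary
primitive `-F` with `F x = x^{1-θ} (L²/u + 2L/u² + 2/u³)`, `L = log x + log 2`, `u = θ - 1`, and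
`F ≥ 0` on `[1, ∞)`, so the series telescopes to at most
`F 1 = (log 2)²/u + 2 log 2/u² + 2/u³`, which falls short of the stated bound by
`2 log 2 (u² - u + 1)/u³ > 0`.
-/

open Real

noncomputable def logSqRpowPrimitive (θ c x : ℝ) : ℝ :=
  x ^ (1 - θ) * ((log x + c) ^ 2 / (θ - 1) + 2 * (log x + c) / (θ - 1) ^ 2 + 2 / (θ - 1) ^ 3)

theorem hasDerivAt_neg_logSqRpowPrimitive {θ c x : ℝ} (hθ : θ ≠ 1) (hx : x ≠ 0) :
    HasDerivAt (fun y => -logSqRpowPrimitive θ c y) ((log x + c) ^ 2 * x ^ (-θ)) x := by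
  have hu : θ - 1 ≠ 0 := sub_ne_zero.mpr hθ
  have hpow : HasDerivAt (fun y : ℝ => y ^ (1 - θ)) ((1 - θ) * x ^ (-θ)) x := by
    simpa using hasDerivAt_rpow_const (p := 1 - θ) (Or.inl hx)
  have hlog : HasDerivAt (fun y => log y + c) x⁻¹ x := (hasDerivAt_log hx).add_const c
  have hpoly : HasDerivAt
      (fun y => (log y + c) ^ 2 / (θ - 1) + 2 * (log y + c) / (θ - 1) ^ 2 + 2 / (θ - 1) ^ 3)
      (2 * (log x + c) * x⁻¹ / (θ - 1) + 2 * x⁻¹ / (θ - 1) ^ 2) x := by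
    simpa using (((hlog.pow 2).div_const (θ - 1)).add
      ((hlog.const_mul 2).div_const ((θ - 1) ^ 2))).add_const (2 / (θ - 1) ^ 3)
  refine (hpow.mul hpoly).neg.congr_deriv ?_
  rw [show 1 - θ = -θ + 1 by ring, rpow_add_one hx]
  field_simp
  ring

theorem logSqRpowPrimitive_nonneg {θ c x : ℝ} (hθ : 1 < θ) (hx : 0 ≤ x) (hL : 0 ≤ log x + c) :
    0 ≤ logSqRpowPrimitive θ c x := by
  have hu : 0 < θ - 1 := sub_pos.mpr hθ
  unfold logSqRpowPrimitive
  positivity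

theorem ne_zero_of_mem_uIcc_of_pos {a b x : ℝ} (ha : 0 < a) (hb : 0 < b)
    (hx : x ∈ Set.uIcc a b) : x ≠ 0 :=
  (lt_of_lt_of_le (lt_min ha hb) hx.1).ne'

theorem intervalIntegrable_log_add_sq_mul_rpow_neg {θ c a b : ℝ} (ha : 0 < a) (hb : 0 < b) :
    IntervalIntegrable (fun x => (log x + c) ^ 2 * x ^ (-θ)) MeasureTheory.volume a b := by
  refine ContinuousOn.intervalIntegrable fun x hx => ?_
  have hx₀ := ne_zero_of_mem_uIcc_of_pos ha hb hx
  exact ((((continuousAt_log hx₀).add continuousAt_const).pow 2).mul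
    (continuousAt_rpow_const _ _ (Or.inl hx₀))).continuousWithinAt

theorem integral_log_add_sq_mul_rpow_neg {θ c a b : ℝ} (hθ : θ ≠ 1) (ha : 0 < a) (hb : 0 < b) :
    ∫ x in a..b, (log x + c) ^ 2 * x ^ (-θ) =
      logSqRpowPrimitive θ c a - logSqRpowPrimitive θ c b := by
  rw [intervalIntegral.integral_eq_sub_of_hasDerivAt
    (fun x hx => hasDerivAt_neg_logSqRpowPrimitive hθ (ne_zero_of_mem_uIcc_of_pos ha hb hx))
    (intervalIntegrable_log_add_sq_mul_rpow_neg ha hb)]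
  ring

theorem log_sq_mul_rpow_neg_le_integral {θ a : ℝ} (hθ : 0 ≤ θ) (ha : 2 ≤ a) :
    log a ^ 2 * a ^ (-θ) ≤ ∫ x in (a - 1)..a, (log x + log 2) ^ 2 * x ^ (-θ) := by
  calc log a ^ 2 * a ^ (-θ) = ∫ _ in (a - 1)..a, log a ^ 2 * a ^ (-θ) := by simp
    _ ≤ ∫ x in (a - 1)..a, (log x + log 2) ^ 2 * x ^ (-θ) := by
      refine intervalIntegral.integral_mono_on (by linarith) intervalIntegrable_const
        (intervalIntegrable_log_add_sq_mul_rpow_neg (by linarith) (by linarith)) ?_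
      rintro x ⟨hx₁, hx₂⟩
      have hx : 0 < x := by linarith
      have hlog : log a ≤ log x + log 2 := by
        rw [← log_mul hx.ne' two_ne_zero]
        exact log_le_log (by linarith) (by linarith)
      exact mul_le_mul (pow_le_pow_left₀ (log_nonneg (by linarith)) hlog 2)
        (rpow_le_rpow_of_nonpos hx hx₂ (neg_nonpos.mpr hθ)) (by positivity) (by positivity)

theorem summable_and_tsum_le_of_le_sub_succ {f g : ℕ → ℝ} (hf : ∀ n, 0 ≤ f n)
    (hg : ∀ n, 0 ≤ g n) (hfg : ∀ n, f n ≤ g n - g (n + 1)) : Summable f ∧ ∑' n, f n ≤ g 0 := by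
  have hpartial : ∀ N, ∑ n ∈ Finset.range N, f n ≤ g 0 := fun N =>
    calc ∑ n ∈ Finset.range N, f n ≤ ∑ n ∈ Finset.range N, (g n - g (n + 1)) :=
          Finset.sum_le_sum fun n _ => hfg n
      _ = g 0 - g N := Finset.sum_range_sub' g N
      _ ≤ g 0 := sub_le_self _ (hg N)
  exact ⟨summable_of_sum_range_le hf hpartial, Real.tsum_le_of_sum_range_le hf hpartial⟩

theorem log_sq_mul_rpow_neg_le_logSqRpowPrimitive_sub {θ a : ℝ} (hθ : 1 < θ) (ha : 2 ≤ a) :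
    log a ^ 2 * a ^ (-θ) ≤
      logSqRpowPrimitive θ (log 2) (a - 1) - logSqRpowPrimitive θ (log 2) a := by
  rw [← integral_log_add_sq_mul_rpow_neg hθ.ne' (by linarith) (by linarith)]
  exact log_sq_mul_rpow_neg_le_integral (by linarith) ha

theorem logSqRpowPrimitive_log_two_one_lt {θ : ℝ} (hθ : 1 < θ) :
    logSqRpowPrimitive θ (log 2) 1 <
      log 2 ^ 2 / (θ - 1) + 2 / (θ - 1) * ((log 2 + 1) / (θ - 1) ^ 2 + log 2) := by
  have hu : 0 < θ - 1 := sub_pos.mpr hθ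
  have hl : 0 < log 2 := log_pos one_lt_two
  have hgap : log 2 ^ 2 / (θ - 1) + 2 / (θ - 1) * ((log 2 + 1) / (θ - 1) ^ 2 + log 2) -
      logSqRpowPrimitive θ (log 2) 1 = 2 * log 2 * ((θ - 1) ^ 2 - (θ - 1) + 1) / (θ - 1) ^ 3 := by
    simp only [logSqRpowPrimitive, one_rpow, log_one, zero_add, one_mul]
    field_simp
    ring
  have hquad : 0 < (θ - 1) ^ 2 - (θ - 1) + 1 := by nlinarith
  have : 0 < 2 * log 2 * ((θ - 1) ^ 2 - (θ - 1) + 1) / (θ - 1) ^ 3 := by positivity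
  linarith

/-- Appendix C, inequality (C.3): for `θ > 1`, the series
`∑_{n=2}^∞ (log n)²·n^{−θ}` (which equals `Z''(θ)`) converges and is
`< (log 2)²/(θ−1) + (2/(θ−1))·[(log 2 + 1)/(θ−1)² + log 2]`. -/
theorem stmt_18 (θ : ℝ) (hθ : 1 < θ) :
    Summable (fun n : ℕ => Real.log ((n : ℝ) + 2) ^ 2 * ((n : ℝ) + 2) ^ (-θ)) ∧
      ∑' n : ℕ, Real.log ((n : ℝ) + 2) ^ 2 * ((n : ℝ) + 2) ^ (-θ) <
        Real.log 2 ^ 2 / (θ - 1) +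
          (2 / (θ - 1)) * ((Real.log 2 + 1) / (θ - 1) ^ 2 + Real.log 2) := by
  set F : ℕ → ℝ := fun n => logSqRpowPrimitive θ (log 2) ((n : ℝ) + 1)
  have hterm : ∀ n : ℕ, log ((n : ℝ) + 2) ^ 2 * ((n : ℝ) + 2) ^ (-θ) ≤ F n - F (n + 1) := by
    intro n
    convert log_sq_mul_rpow_neg_le_logSqRpowPrimitive_sub hθ
      (by linarith [n.cast_nonneg (α := ℝ)] : 2 ≤ (n : ℝ) + 2) using 3 <;> push_cast <;> ring
  have hF_nonneg : ∀ n, 0 ≤ F n := fun n =>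
    logSqRpowPrimitive_nonneg hθ (by positivity)
      (add_nonneg (log_nonneg (by linarith [n.cast_nonneg (α := ℝ)])) (log_nonneg one_le_two))
  obtain ⟨hsum, hle⟩ :=
    summable_and_tsum_le_of_le_sub_succ (fun n => by positivity) hF_nonneg hterm
  refine ⟨hsum, hle.trans_lt ?_⟩
  simpa [F] using logSqRpowPrimitive_log_two_one_lt hθ
end
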